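/- arXiv:1708.09073 — 5 statements merged into one kernel-verified Lean document; each statement's English description precedes it below -/
import Mathlib

section
/- Let B₁ = (Q₁, I₁, F₁, δ₁) and B₂ = (Q₂, I₂, F₂, δ₂) be Boolean finite automata over the same alphabet α. Define their union B₁ ∪ B₂ = (Q₁ ⊕ Q₂, I, F, δ) where I v := I₁ (v ∘ Sum.inl) ∨ I₂ (v ∘ Sum.inr), F := Sum.elim F₁ F₂, δ (Sum.inl q) a v := δ₁ q a (v ∘ Sum.inl), and δ (Sum.inr q) a v := δ₂ q a (v ∘ Sum.inr). Then for every word w : List α, B₁ ∪ B₂ accepts w if and only if B₁ accepts w or B₂ accepts w; that is, L(B₁ ∪ B₂) = L(B₁) ∪ L(B₂). -/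
/-- A Boolean finite automaton over alphabet `α` with state type `Q`. -/
structure BFA (α : Type*) (Q : Type*) where
  I : (Q → Prop) → Prop
  F : Q → Prop
  δ : Q → α → (Q → Prop) → Prop

/-- A word `w` is accepted by the BFA `B` iff, after substituting transitions for states
symbol by symbol starting from the initial Boolean function, the resulting Boolean function
holds on the final assignment. -/
def BFA.Accepts {α Q : Type*} (B : BFA α Q) (w : List α) : Prop :=
  (List.foldl (fun G a => fun v => G (fun q => B.δ q a v)) B.I w) B.F

/-- The union of two BFAs: disjoint union of states, disjunction of initial functions. -/
def BFA.union {α Q₁ Q₂ : Type*} (B₁ : BFA α Q₁) (B₂ : BFA α Q₂) : BFA α (Q₁ ⊕ Q₂) :=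
  { I := fun v => B₁.I (v ∘ Sum.inl) ∨ B₂.I (v ∘ Sum.inr)
    F := Sum.elim B₁.F B₂.F
    δ := fun q a v =>
      match q with
      | Sum.inl q => B₁.δ q a (v ∘ Sum.inl)
      | Sum.inr q => B₂.δ q a (v ∘ Sum.inr) }

theorem BFA.union_foldl {α Q₁ Q₂ : Type*} (B₁ : BFA α Q₁) (B₂ : BFA α Q₂) (w : List α) :
    ∀ (G₁ : (Q₁ → Prop) → Prop) (G₂ : (Q₂ → Prop) → Prop),
    List.foldl (fun G a => fun v => G (fun q => (B₁.union B₂).δ q a v))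
      (fun v => G₁ (v ∘ Sum.inl) ∨ G₂ (v ∘ Sum.inr)) w
    = fun v => (List.foldl (fun G a => fun v => G (fun q => B₁.δ q a v)) G₁ w) (v ∘ Sum.inl)
      ∨ (List.foldl (fun G a => fun v => G (fun q => B₂.δ q a v)) G₂ w) (v ∘ Sum.inr) := by
  induction w with
  | nil => intro G₁ G₂; rfl
  | cons a w ih =>
    intro G₁ G₂
    simp only [List.foldl_cons]
    exact ih (fun u => G₁ fun q => B₁.δ q a u) (fun u => G₂ fun q => B₂.δ q a u)

/-- The union BFA accepts exactly the words accepted by either constituent BFA: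
`L(B₁ ∪ B₂) = L(B₁) ∪ L(B₂)`. -/
theorem BFA.union_accepts {α Q₁ Q₂ : Type*} (B₁ : BFA α Q₁) (B₂ : BFA α Q₂) (w : List α) :
    (B₁.union B₂).Accepts w ↔ B₁.Accepts w ∨ B₂.Accepts w := by
  show _ ↔ _
  unfold BFA.Accepts
  rw [show (B₁.union B₂).I = fun v => B₁.I (v ∘ Sum.inl) ∨ B₂.I (v ∘ Sum.inr) from rfl,
    BFA.union_foldl]
  rfl
end

section
/- Let B = (Q, I, F, δ) be a Boolean finite automaton over alphabet α. Consider the deterministic finite automaton D with state type Q → Prop, initial state F, step function D.step v a := fun q => δ q a v, and accepting set {v | I v}. Then for every word w : List α, D accepts w if and only if B accepts w.reverse; that is, the language of D is exactly the set of reversals of words in L(B). In particular the reversed Boolean finite automaton has a deterministic transition function. -/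
/-- The reversed BFA, viewed as a deterministic automaton on valuations: the initial state is
the final assignment `F`, a step substitutes the current valuation into the transition function,
and a valuation is accepting iff the initial Boolean function `I` holds on it. -/
def BFA.toReverseDFA {α Q : Type*} (B : BFA α Q) : DFA α (Q → Prop) :=
  { step := fun v a => fun q => B.δ q a v
    start := B.F
    accept := { v | B.I v } }

theorem DFA.foldl_comp_step {α σ β : Type*} (M : DFA α σ) (G : σ → β) (w : List α) :
    w.foldl (fun G a => G ∘ (M.step · a)) G = G ∘ (M.evalFrom · w.reverse) := by
  induction w generalizing G with
  | nil => rfl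
  | cons a w ih =>
    rw [List.foldl_cons, ih, List.reverse_cons]
    funext v
    exact congrArg G (M.evalFrom_append_singleton v w.reverse a).symm

/-- The deterministic automaton on valuations accepts exactly the reversals of words accepted
by the BFA; in particular the reversed BFA has a deterministic transition function. -/
theorem BFA.toReverseDFA_accepts {α Q : Type*} (B : BFA α Q) (w : List α) :
    w ∈ B.toReverseDFA.accepts ↔ B.Accepts w.reverse := by
  -- The fold in `BFA.Accepts` is, definitionally, the pullback of `I` along `toReverseDFA`.
  have h := congrFun (B.toReverseDFA.foldl_comp_step B.I w.reverse) B.F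
  rw [List.reverse_reverse] at h
  exact (iff_of_eq h).symm
end

section
/- Let B = (Q, I, F, δ) be a Boolean finite automaton over alphabet α. A word w = [a₁, …, aₙ] : List α is accepted by B if and only if there exists a sequence of valuations v₀, v₁, …, vₙ : Q → Prop such that I v₀ holds, vₙ = F, and for every i < n and every state q, vᵢ q ↔ δ q a_{i+1} v_{i+1}. (This characterizes accepted words as counterexample paths of the transition system produced by the BFA-to-TS encoding.) -/
lemma bfa_aux {α Q : Type*} (δ : Q → α → (Q → Prop) → Prop) (w : List α) :
    ∀ (I : (Q → Prop) → Prop) (F : Q → Prop),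
    (List.foldl (fun G a => fun v => G (fun q => δ q a v)) I w) F ↔
      ∃ v : Fin (w.length + 1) → (Q → Prop),
        I (v 0) ∧ v (Fin.last w.length) = F ∧
          ∀ i : Fin w.length, ∀ q : Q, v i.castSucc q ↔ δ q (w.get i) (v i.succ) := by
  induction w with
  | nil =>
    intro I F
    simp only [List.foldl_nil, List.length_nil]
    constructor
    · intro h
      exact ⟨fun _ => F, h, rfl, fun i => i.elim0⟩
    · rintro ⟨v, hI, hF, -⟩
      have : (0 : Fin 1) = Fin.last 0 := rfl
      rw [this, hF] at hI
      exact hI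
  | cons a t ih =>
    intro I F
    simp only [List.foldl_cons, List.length_cons, List.get_eq_getElem]
    rw [ih]
    constructor
    · rintro ⟨v', hI, hF, hδ⟩
      refine ⟨Fin.cons (fun q => δ q a (v' 0)) v', ?_, ?_, ?_⟩
      · simpa using hI
      · have : Fin.last (t.length + 1) = Fin.succ (Fin.last t.length) := rfl
        rw [this, Fin.cons_succ]
        exact hF
      · intro i q
        refine Fin.cases ?_ ?_ i
        · simp [Fin.castSucc_zero, Fin.cons_zero, Fin.succ_zero_eq_one]
        · intro j
          have h1 : Fin.castSucc (Fin.succ j) = Fin.succ (Fin.castSucc j) := rfl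
          rw [h1, Fin.cons_succ, Fin.cons_succ]
          simpa using hδ j q
    · rintro ⟨v, hI, hF, hδ⟩
      refine ⟨fun i => v i.succ, ?_, ?_, ?_⟩
      · have h0 : v 0 = fun q => δ q a (v (Fin.succ 0)) := by
          funext q
          exact propext (hδ 0 q)
        rw [h0] at hI
        exact hI
      · exact hF
      · intro i q
        simpa using hδ i.succ q


/-- A word `w = [a₁, …, aₙ]` is accepted by a BFA iff there is a sequence of valuations
`v₀, …, vₙ` with `I v₀`, `vₙ = F`, and `vᵢ q ↔ δ q a_{i+1} v_{i+1}` for all `i < n` and all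
states `q` (i.e. accepted words are exactly counterexample paths of the BFA-to-TS encoding). -/
theorem BFA.accepts_iff_exists_valuations {α Q : Type*} (B : BFA α Q) (w : List α) :
    B.Accepts w ↔
      ∃ v : Fin (w.length + 1) → (Q → Prop),
        B.I (v 0) ∧ v (Fin.last w.length) = B.F ∧
          ∀ i : Fin w.length, ∀ q : Q, v i.castSucc q ↔ B.δ q (w.get i) (v i.succ) := by
  exact bfa_aux B.δ w B.I B.F
end

section
/- (Multi-variable decision procedure, Theorem 3.) Let φ be a multi-variable regular-membership formula over alphabet α with variables indexed by Fin m, and let Γ := α ⊕ Bool with σ_s := Sum.inr false and σ_e := Sum.inr true. Then φ is satisfiable — i.e., there exist words w : Fin m → List α such that φ is true when atom '(i, L)' is interpreted as w i ∈ L — if and only if there exist a common length N and padded words u : Fin m → List Γ, each of length N and each of the form u i = σ_s^{jᵢ} ++ ((w i).map Sum.inl) ++ σ_e^{kᵢ} with jᵢ ≥ 1 and kᵢ ≥ 1 for some w i : List α (the MV-Rewrite validity constraint), such that φ is true when atom '(i, L)' is interpreted as u i ∈ pad(L). -/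
/-- The start symbol of the extended alphabet `Γ = α ⊕ Bool`. -/
def startSym (α : Type) : α ⊕ Bool := Sum.inr false

/-- The end symbol of the extended alphabet `Γ = α ⊕ Bool`. -/
def endSym (α : Type) : α ⊕ Bool := Sum.inr true

/-- The padded language over `Γ = α ⊕ Bool`:
`pad L = { σₛ^j ++ (w.map Sum.inl) ++ σₑ^k | j ≥ 1, k ≥ 1, w ∈ L }`. -/
def pad {α : Type} (L : Language α) : Language (α ⊕ Bool) :=
  { u | ∃ (j k : ℕ) (w : List α), 1 ≤ j ∧ 1 ≤ k ∧ w ∈ L ∧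
      u = List.replicate j (startSym α) ++ w.map Sum.inl ++ List.replicate k (endSym α) }

/-- Multi-variable regular-membership formulas over alphabet `α` with variables indexed by
`Fin m`: conjunction, disjunction, negation, and atoms `(i, L)` asserting that the `i`-th
variable belongs to the language `L`. -/
inductive MVFormula (α : Type) (m : ℕ) : Type
  | atom : Fin m → Language α → MVFormula α m
  | and : MVFormula α m → MVFormula α m → MVFormula α m
  | or : MVFormula α m → MVFormula α m → MVFormula α m
  | not : MVFormula α m → MVFormula α m

/-- Evaluation of a multi-variable formula under an interpretation `ρ` of the atoms,
with the evident Boolean semantics. -/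
def MVFormula.Eval {α : Type} {m : ℕ} (ρ : Fin m → Language α → Prop) :
    MVFormula α m → Prop
  | atom i L => ρ i L
  | and φ ψ => φ.Eval ρ ∧ ψ.Eval ρ
  | or φ ψ => φ.Eval ρ ∨ ψ.Eval ρ
  | not φ => ¬ φ.Eval ρ

lemma extract_eq {α : Type} (j k : ℕ) (w : List α) :
    (List.replicate j (startSym α) ++ w.map Sum.inl ++
      List.replicate k (endSym α)).filterMap Sum.getLeft? = w := by
  simp [startSym, endSym, List.filterMap_append, List.filterMap_replicate,
    List.filterMap_map]
  exact List.filterMap_eq_map_iff_forall_eq_some.mpr (fun a _ => rfl) ▸ List.map_id w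

lemma eval_congr {α : Type} {m : ℕ} {ρ ρ' : Fin m → Language α → Prop}
    (h : ∀ i L, ρ i L ↔ ρ' i L) (φ : MVFormula α m) : φ.Eval ρ ↔ φ.Eval ρ' := by
  induction φ with
  | atom i L => exact h i L
  | and a b iha ihb => exact and_congr iha ihb
  | or a b iha ihb => exact or_congr iha ihb
  | not a iha => exact not_congr iha

lemma pad_mem_iff {α : Type} (L : Language α) (j k : ℕ) (hj : 1 ≤ j) (hk : 1 ≤ k)
    (w : List α) :
    (List.replicate j (startSym α) ++ w.map Sum.inl ++ List.replicate k (endSym α)) ∈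
      pad L ↔ w ∈ L := by
  constructor
  · rintro ⟨j', k', w', _, _, hw', he⟩
    have := congrArg (List.filterMap Sum.getLeft?) he
    rw [extract_eq, extract_eq] at this
    exact this ▸ hw'
  · intro hw; exact ⟨j, k, w, hj, hk, hw, rfl⟩

/-- Multi-variable decision procedure: a multi-variable regular-membership formula is
satisfiable by words `w : Fin m → List α` (atom `(i, L)` read as `w i ∈ L`) iff there are a
common length `N` and valid padded words `u i = σₛ^{jᵢ} ++ ((w i).map Sum.inl) ++ σₑ^{kᵢ}`
(with `jᵢ, kᵢ ≥ 1`), all of length `N`, satisfying the formula with atom `(i, L)` read as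
`u i ∈ pad L`. -/
theorem MVFormula.satisfiable_iff_padded {α : Type} {m : ℕ} (φ : MVFormula α m) :
    (∃ w : Fin m → List α, φ.Eval fun i L => w i ∈ L) ↔
      (∃ (N : ℕ) (u : Fin m → List (α ⊕ Bool)),
        (∀ i, (u i).length = N) ∧
        (∀ i, ∃ (w : List α) (j k : ℕ), 1 ≤ j ∧ 1 ≤ k ∧
          u i = List.replicate j (startSym α) ++ w.map Sum.inl
            ++ List.replicate k (endSym α)) ∧
        φ.Eval fun i L => u i ∈ pad L) := by
  constructor
  · rintro ⟨w, hw⟩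
    classical
    set N : ℕ := (Finset.univ.sup fun i => (w i).length) + 2 with hN
    have hle : ∀ i, (w i).length + 2 ≤ N := fun i =>
      Nat.add_le_add_right (Finset.le_sup (f := fun i => (w i).length)
        (Finset.mem_univ i)) 2
    refine ⟨N, fun i => List.replicate 1 (startSym α) ++ (w i).map Sum.inl ++
      List.replicate (N - (w i).length - 1) (endSym α), ?_, ?_, ?_⟩
    · intro i
      have h := hle i
      simp [List.length_append]
      omega
    · intro i
      exact ⟨w i, 1, N - (w i).length - 1, le_refl 1, by have := hle i; omega, rfl⟩
    · rw [← eval_congr (fun i L =>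
        pad_mem_iff L 1 (N - (w i).length - 1) (le_refl 1)
          (by have := hle i; omega) (w i)) φ] at hw
      exact hw
  · rintro ⟨N, u, _, hvalid, hu⟩
    classical
    choose w j k hj hk heq using hvalid
    refine ⟨w, ?_⟩
    rw [eval_congr (ρ' := fun i L => w i ∈ L) (fun i L => by
      rw [heq i]; exact pad_mem_iff L (j i) (k i) (hj i) (hk i) (w i)) φ] at hu
    exact hu
end

section
/- (Reversal of an NFA.) Let M be an NFA over alphabet α with state type Q, start set M.start, accepting set M.accept, and transition M.step. Define the reversed NFA M^R with start set M.accept, accepting set M.start, and transition M^R.step q a := { p | q ∈ M.step p a }. Then for every word w : List α, M^R accepts w if and only if M accepts w.reverse; that is, the language of M^R is exactly the set of reversals of words accepted by M. -/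
/-- The reversed NFA: start and accepting sets are swapped and every transition is
reversed, i.e. `M^R.step q a = { p | q ∈ M.step p a }`. -/
def NFA.reversed {α Q : Type*} (M : NFA α Q) : NFA α Q :=
  { step := fun q a => { p | q ∈ M.step p a }
    start := M.accept
    accept := M.start }

theorem NFA.reversed_eq_reverse {α Q : Type*} (M : NFA α Q) : M.reversed = M.reverse := rfl

/-- The reversed NFA accepts exactly the reversals of the words accepted by the original
NFA. -/
theorem NFA.reverse_accepts {α Q : Type*} (M : NFA α Q) (w : List α) :
    w ∈ M.reversed.accepts ↔ w.reverse ∈ M.accepts := by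
  rw [reversed_eq_reverse]
  exact M.mem_accepts_reverse
end
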